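/- For every n-GNN A all of whose activation functions are eventually constant, there exists an n-MP² formula ψ_A(x) equivalent to A; moreover, if A is local the formula can be taken in local MP², and if A is outgoing-only the formula can be taken outgoing-only. -/

import Mathlib

set_option maxHeartbeats 1000000

/-- An `n`-graph: a nonempty finite vertex set, a set of directed edges,
and `n` vertex colors. -/
structure NGraph (n : ℕ) where
  V : Type
  [fintypeV : Fintype V]
  [decEqV : DecidableEq V]
  nonemptyV : Nonempty V
  E : V → V → Bool
  U : Fin n → V → Bool

attribute [instance] NGraph.fintypeV NGraph.decEqV

/-- An `n`-GNN.  Layer `ℓ+1` (for `0 ≤ ℓ < L`) has activation function `act ℓ`,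
coefficient matrices `C ℓ`, `Aout ℓ`, `Ain ℓ`, `R ℓ` and bias vector `b ℓ`. -/
structure GNN (n : ℕ) where
  L : ℕ
  Lpos : 0 < L
  d : ℕ → ℕ
  d0 : d 0 = n
  dpos : ∀ ℓ, 0 < d ℓ
  act : ℕ → ℚ → ℚ
  C : (ℓ : ℕ) → Matrix (Fin (d (ℓ+1))) (Fin (d ℓ)) ℚ
  Aout : (ℓ : ℕ) → Matrix (Fin (d (ℓ+1))) (Fin (d ℓ)) ℚ
  Ain : (ℓ : ℕ) → Matrix (Fin (d (ℓ+1))) (Fin (d ℓ)) ℚ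
  R : (ℓ : ℕ) → Matrix (Fin (d (ℓ+1))) (Fin (d ℓ)) ℚ
  b : (ℓ : ℕ) → Fin (d (ℓ+1)) → ℚ

/-- The feature maps `ξ⁽ℓ⁾` computed by a GNN on an `n`-graph. -/
def GNN.feat {n : ℕ} (A : GNN n) (G : NGraph n) : (ℓ : ℕ) → G.V → (Fin (A.d ℓ) → ℚ)
  | 0 => fun v i => if G.U (Fin.cast A.d0 i) v then 1 else 0
  | ℓ+1 => fun v i =>
      A.act ℓ
        ((A.C ℓ).mulVec (A.feat G ℓ v) i
          + (A.Aout ℓ).mulVec (∑ u ∈ Finset.univ.filter (fun u => G.E v u), A.feat G ℓ u) i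
          + (A.Ain ℓ).mulVec (∑ u ∈ Finset.univ.filter (fun u => G.E u v), A.feat G ℓ u) i
          + (A.R ℓ).mulVec (∑ u, A.feat G ℓ u) i
          + A.b ℓ i)

/-- A GNN accepts `(G, v)` if the first entry of the final feature vector is `≥ 1/2`. -/
def GNN.accepts {n : ℕ} (A : GNN n) (G : NGraph n) (v : G.V) : Prop :=
  1/2 ≤ A.feat G A.L v ⟨0, A.dpos A.L⟩

/-- A GNN is satisfiable if it accepts some node of some graph. -/
def GNN.Satisfiable {n : ℕ} (A : GNN n) : Prop :=
  ∃ (G : NGraph n) (v : G.V), A.accepts G v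

/-- A GNN is universally satisfiable if it accepts every node of some graph. -/
def GNN.UnivSatisfiable {n : ℕ} (A : GNN n) : Prop :=
  ∃ G : NGraph n, ∀ v : G.V, A.accepts G v

/-- A GNN is local if all its global-readout matrices are zero. -/
def GNN.IsLocal {n : ℕ} (A : GNN n) : Prop := ∀ ℓ < A.L, A.R ℓ = 0

/-- A GNN is outgoing-only if all its incoming-aggregation matrices are zero. -/
def GNN.IsOutgoingOnly {n : ℕ} (A : GNN n) : Prop := ∀ ℓ < A.L, A.Ain ℓ = 0

/-- A function is eventually constant if it is constant below some left threshold
and constant above some right threshold. -/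
def EventuallyConstant (f : ℚ → ℚ) : Prop :=
  ∃ tl tr : ℚ, tl < tr ∧ (∀ x ≤ tl, f x = f tl) ∧ (∀ x ≥ tr, f x = f tr)

/-- The truncated ReLU. -/
def trReLU (x : ℚ) : ℚ := min (max x 0) 1

/-- The standard ReLU. -/
def ReLU (x : ℚ) : ℚ := max x 0

/-- The `ℓ`-spectrum of a GNN: all values of the `ℓ`-th feature map over all
`n`-graphs and vertices. -/
def GNN.spectrum {n : ℕ} (A : GNN n) (ℓ : ℕ) : Set (Fin (A.d ℓ) → ℚ) :=
  { s | ∃ (G : NGraph n) (v : G.V), A.feat G ℓ v = s }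
/-- Guards of Presburger quantifiers: `E(x,y)`, `E(y,x)`, or `⊤`. -/
inductive MPGuard : Type
  | out | inc | top
deriving DecidableEq

mutual
  /-- Two-variable modal logic with Presburger quantifiers (`MP²`) over `n`
  unary predicates.  A Presburger quantifier `pres δ ts` asserts
  `Σₜ λₜ·#y[εₜ(x,y) ∧ φₜ(y)] ≥ δ`, where the finite sum of terms is
  represented by `ts : PresSum n`. -/
  inductive MP2 (n : ℕ) : Type
    | tru : MP2 n
    | unary (c : Fin n) : MP2 n
    | not (φ : MP2 n) : MP2 n
    | and (φ ψ : MP2 n) : MP2 n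
    | pres (δ : ℤ) (ts : PresSum n) : MP2 n

  /-- A finite list of terms `λ·#y[ε(x,y) ∧ φ(y)]` of a Presburger quantifier. -/
  inductive PresSum (n : ℕ) : Type
    | nil : PresSum n
    | cons (lam : ℤ) (g : MPGuard) (φ : MP2 n) (rest : PresSum n) : PresSum n
end

/-- Semantics of a guard at a pair of vertices. -/
def MPGuard.holds {n : ℕ} (G : NGraph n) : MPGuard → G.V → G.V → Bool
  | .out, v, u => G.E v u
  | .inc, v, u => G.E u v
  | .top, _, _ => true

mutual
  /-- Satisfaction of an `MP²` formula at a vertex of an `n`-graph. -/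
  def MP2.sat {n : ℕ} (G : NGraph n) : MP2 n → G.V → Bool
    | .tru, _ => true
    | .unary c, v => G.U c v
    | .not φ, v => ! φ.sat G v
    | .and φ ψ, v => φ.sat G v && ψ.sat G v
    | .pres δ ts, v => decide (δ ≤ ts.val G v)

  /-- The value `Σₜ λₜ·#y[εₜ(x,y) ∧ φₜ(y)]` at a vertex. -/
  def PresSum.val {n : ℕ} (G : NGraph n) : PresSum n → G.V → ℤ
    | .nil, _ => 0
    | .cons lam g φ rest, v =>
        lam * ((Finset.univ.filter fun u => g.holds G v u && φ.sat G u).card : ℤ)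
          + rest.val G v
end

mutual
  /-- A formula is local if it contains no `⊤` guard. -/
  def MP2.IsLocal {n : ℕ} : MP2 n → Prop
    | .tru => True
    | .unary _ => True
    | .not φ => φ.IsLocal
    | .and φ ψ => φ.IsLocal ∧ ψ.IsLocal
    | .pres _ ts => ts.IsLocal

  def PresSum.IsLocal {n : ℕ} : PresSum n → Prop
    | .nil => True
    | .cons _ g φ rest => g ≠ MPGuard.top ∧ φ.IsLocal ∧ rest.IsLocal
end

mutual
  /-- A formula is outgoing-only if it contains no `E(y,x)` guard. -/
  def MP2.IsOutgoingOnly {n : ℕ} : MP2 n → Prop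
    | .tru => True
    | .unary _ => True
    | .not φ => φ.IsOutgoingOnly
    | .and φ ψ => φ.IsOutgoingOnly ∧ ψ.IsOutgoingOnly
    | .pres _ ts => ts.IsOutgoingOnly

  def PresSum.IsOutgoingOnly {n : ℕ} : PresSum n → Prop
    | .nil => True
    | .cons _ g φ rest => g ≠ MPGuard.inc ∧ φ.IsOutgoingOnly ∧ rest.IsOutgoingOnly
end

/-- A GNN and an `MP²` formula are equivalent if they accept exactly the same
vertices of the same `n`-graphs. -/
def GNN.EquivMP2 {n : ℕ} (A : GNN n) (φ : MP2 n) : Prop :=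
  ∀ (G : NGraph n) (v : G.V), A.accepts G v ↔ φ.sat G v = true


/-!
By induction on the layers, every feature map `ξ⁽ℓ⁾` takes only finitely many values, and for
each value `s` the vertices with `ξ⁽ℓ⁾(v) = s` are defined by an `MP²` formula. For the step,
the preactivation of a coordinate at `v` is `c + Q(v) / D`, where `c` depends only on
`ξ⁽ℓ⁾(v)`, `D` is a common denominator of the matrix coefficients and `Q(v)` is an integer
combination of the counts `#y[ε(x,y) ∧ ξ⁽ℓ⁾(y) = s]`. As `σ⁽ℓ⁾` is eventually constant,
`m ↦ σ⁽ℓ⁾(c + m / D)` is constant outside a finite interval of integers, so `ξ⁽ℓ⁺¹⁾` again takes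
finitely many values, each defined by a Boolean combination of Presburger quantifiers over `Q`.
A guard enters such a quantifier only with the coefficients of its own aggregation matrix,
so guards whose matrices vanish never occur.
-/

open Finset

variable {n : ℕ}

lemma exists_nat_mul_eq_int {ι : Type*} (s : Finset ι) (q : ι → ℚ) :
    ∃ D : ℕ, 0 < D ∧ ∃ z : ι → ℤ, ∀ i ∈ s, (z i : ℚ) = D * q i := by
  set D := ∏ i ∈ s, (q i).den
  refine ⟨D, prod_pos fun i _ => (q i).den_pos, fun i => (D / (q i).den : ℕ) * (q i).num,
    fun i hi => ?_⟩
  rw [Int.cast_mul, Int.cast_natCast, Nat.cast_div (dvd_prod_of_mem _ hi) (by positivity)]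
  nth_rw 3 [← Rat.num_div_den (q i)]
  ring

lemma mem_image_Icc_of_tails {α : Type*} [DecidableEq α] {f : ℤ → α} {a b : ℤ} (hab : a ≤ b)
    (ha : ∀ m ≤ a, f m = f a) (hb : ∀ m ≥ b, f m = f b) (m : ℤ) : f m ∈ (Icc a b).image f := by
  by_cases hma : m ≤ a
  · exact ha m hma ▸ mem_image_of_mem f (mem_Icc.2 ⟨le_rfl, hab⟩)
  by_cases hmb : b ≤ m
  · exact hb m hmb ▸ mem_image_of_mem f (mem_Icc.2 ⟨hab, le_rfl⟩)
  exact mem_image_of_mem f (mem_Icc.2 ⟨by omega, by omega⟩)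

lemma EventuallyConstant.exists_int_tails {f : ℚ → ℚ} (hf : EventuallyConstant f) (c : ℚ)
    {D : ℕ} (hD : 0 < D) :
    ∃ a b : ℤ, a ≤ b ∧ (∀ m ≤ a, f (c + m / D) = f (c + a / D)) ∧
      ∀ m ≥ b, f (c + m / D) = f (c + b / D) := by
  obtain ⟨tl, tr, hlr, hl, hr⟩ := hf
  have hD' : (0 : ℚ) < D := by exact_mod_cast hD
  set a := ⌊D * (tl - c)⌋
  set b := ⌈D * (tr - c)⌉
  have hlow : ∀ m ≤ a, f (c + m / D) = f tl := fun m hm => hl _ <| by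
    have := Int.le_floor.1 hm
    linarith [(div_le_iff₀ hD').2 (by linarith : (m : ℚ) ≤ (tl - c) * D)]
  have hhigh : ∀ m ≥ b, f (c + m / D) = f tr := fun m hm => hr _ <| by
    have := Int.ceil_le.1 hm
    linarith [(le_div_iff₀ hD').2 (by linarith : (tr - c) * D ≤ m)]
  refine ⟨a, b, ?_, fun m hm => (hlow m hm).trans (hlow a le_rfl).symm,
    fun m hm => (hhigh m hm).trans (hhigh b le_rfl).symm⟩
  exact (Int.floor_le_floor (by gcongr)).trans (Int.floor_le_ceil _)

instance : Fintype MPGuard where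
  elems := {.out, .inc, .top}
  complete g := by cases g <;> simp

lemma MPGuard.sum_univ {M : Type*} [AddCommMonoid M] (f : MPGuard → M) :
    ∑ g, f g = f .out + f .inc + f .top := by
  simp [Finset.univ, Fintype.elems, add_assoc]

mutual
  def MP2.GuardsIn (P : MPGuard → Prop) : MP2 n → Prop
    | .tru => True
    | .unary _ => True
    | .not φ => φ.GuardsIn P
    | .and φ ψ => φ.GuardsIn P ∧ ψ.GuardsIn P
    | .pres _ ts => ts.GuardsIn P

  def PresSum.GuardsIn (P : MPGuard → Prop) : PresSum n → Prop
    | .nil => True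
    | .cons _ g φ rest => P g ∧ φ.GuardsIn P ∧ rest.GuardsIn P
end

mutual
  theorem MP2.GuardsIn.isLocal : (φ : MP2 n) → φ.GuardsIn (· ≠ .top) → φ.IsLocal
    | .tru, _ => trivial
    | .unary _, _ => trivial
    | .not φ, h => MP2.GuardsIn.isLocal φ h
    | .and φ ψ, h => ⟨MP2.GuardsIn.isLocal φ h.1, MP2.GuardsIn.isLocal ψ h.2⟩
    | .pres _ ts, h => PresSum.GuardsIn.isLocal ts h

  theorem PresSum.GuardsIn.isLocal : (ts : PresSum n) → ts.GuardsIn (· ≠ .top) → ts.IsLocal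
    | .nil, _ => trivial
    | .cons _ _ φ ts, h =>
      ⟨h.1, MP2.GuardsIn.isLocal φ h.2.1, PresSum.GuardsIn.isLocal ts h.2.2⟩
end

mutual
  theorem MP2.GuardsIn.isOutgoingOnly :
      (φ : MP2 n) → φ.GuardsIn (· ≠ .inc) → φ.IsOutgoingOnly
    | .tru, _ => trivial
    | .unary _, _ => trivial
    | .not φ, h => MP2.GuardsIn.isOutgoingOnly φ h
    | .and φ ψ, h =>
      ⟨MP2.GuardsIn.isOutgoingOnly φ h.1, MP2.GuardsIn.isOutgoingOnly ψ h.2⟩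
    | .pres _ ts, h => PresSum.GuardsIn.isOutgoingOnly ts h

  theorem PresSum.GuardsIn.isOutgoingOnly :
      (ts : PresSum n) → ts.GuardsIn (· ≠ .inc) → ts.IsOutgoingOnly
    | .nil, _ => trivial
    | .cons _ _ φ ts, h =>
      ⟨h.1, MP2.GuardsIn.isOutgoingOnly φ h.2.1,
        PresSum.GuardsIn.isOutgoingOnly ts h.2.2⟩
end

open Classical in
/-- The Presburger count `#y[g(v,y) ∧ q(y)]`. -/
noncomputable def NGraph.count (G : NGraph n) (g : MPGuard) (q : G.V → Prop) (v : G.V) : ℕ :=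
  #{u | g.holds G v u ∧ q u}

lemma NGraph.mulVec_sum_holds {G : NGraph n} {k m : ℕ} {F : G.V → Fin k → ℚ}
    {S : Finset (Fin k → ℚ)} (hS : ∀ u, F u ∈ S) (M : Matrix (Fin m) (Fin k) ℚ)
    (g : MPGuard) (v : G.V) :
    M.mulVec (∑ u with g.holds G v u, F u) = ∑ s ∈ S, G.count g (F · = s) v • M.mulVec s := by
  classical
  have hfib := sum_fiberwise_of_maps_to' (s := {u | g.holds G v u}) (fun u _ => hS u) fun s => s
  rw [← hfib, ← Matrix.mulVecLin_apply, map_sum]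
  refine sum_congr rfl fun s _ => ?_
  rw [sum_const, filter_filter, map_nsmul, Matrix.mulVecLin_apply, NGraph.count]
  congr

namespace MP2

variable {P : MPGuard → Prop}

def Definable (P : MPGuard → Prop) (p : (G : NGraph n) → G.V → Prop) : Prop :=
  ∃ φ : MP2 n, φ.GuardsIn P ∧ ∀ G v, φ.sat G v = true ↔ p G v

lemma Definable.congr {p q : (G : NGraph n) → G.V → Prop} (hp : Definable P p)
    (hpq : ∀ G v, p G v ↔ q G v) : Definable P q := by
  obtain ⟨φ, hφP, hφ⟩ := hp
  exact ⟨φ, hφP, fun G v => (hφ G v).trans (hpq G v)⟩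

lemma definable_const (p : Prop) : Definable (n := n) P fun _ _ => p := by
  by_cases hp : p
  · exact ⟨.tru, trivial, fun G v => by simp [MP2.sat, hp]⟩
  · exact ⟨.not .tru, trivial, fun G v => by simp [MP2.sat, hp]⟩

lemma definable_unary (c : Fin n) : Definable P fun G v => G.U c v = true :=
  ⟨.unary c, trivial, fun _ _ => Iff.rfl⟩

lemma Definable.not {p : (G : NGraph n) → G.V → Prop} (hp : Definable P p) :
    Definable P fun G v => ¬p G v := by
  obtain ⟨φ, hφP, hφ⟩ := hp
  exact ⟨.not φ, hφP, fun G v => by simp [MP2.sat, ← hφ]⟩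

lemma Definable.and {p q : (G : NGraph n) → G.V → Prop} (hp : Definable P p)
    (hq : Definable P q) : Definable P fun G v => p G v ∧ q G v := by
  obtain ⟨φ, hφP, hφ⟩ := hp
  obtain ⟨ψ, hψP, hψ⟩ := hq
  exact ⟨.and φ ψ, ⟨hφP, hψP⟩, fun G v => by simp [MP2.sat, ← hφ, ← hψ]⟩

lemma Definable.or {p q : (G : NGraph n) → G.V → Prop} (hp : Definable P p)
    (hq : Definable P q) : Definable P fun G v => p G v ∨ q G v :=
  (hp.not.and hq.not).not.congr fun _ _ => by tauto

lemma definable_exists_mem {ι : Type*} (s : Finset ι) {p : ι → (G : NGraph n) → G.V → Prop}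
    (hp : ∀ i ∈ s, Definable P (p i)) : Definable P fun G v => ∃ i ∈ s, p i G v := by
  classical
  induction s using Finset.induction_on with
  | empty => exact (definable_const False).congr fun _ _ => by simp
  | insert j s _ ih =>
    refine ((hp j (mem_insert_self j s)).or (ih fun i hi => hp i (mem_insert_of_mem hi))).congr
      fun _ _ => by simp

lemma definable_forall {ι : Type*} [Fintype ι] {p : ι → (G : NGraph n) → G.V → Prop}
    (hp : ∀ i, Definable P (p i)) : Definable P fun G v => ∀ i, p i G v :=
  (definable_exists_mem univ fun i _ => (hp i).not).not.congr fun _ _ => by simp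

lemma exists_presSum_val_eq {ι : Type*} (s : Finset ι) (lam : ι → ℤ) (g : ι → MPGuard)
    {q : ι → (G : NGraph n) → G.V → Prop} (hg : ∀ i ∈ s, lam i ≠ 0 → P (g i))
    (hq : ∀ i ∈ s, Definable P (q i)) :
    ∃ ts : PresSum n, ts.GuardsIn P ∧
      ∀ G v, ts.val G v = ∑ i ∈ s, lam i * G.count (g i) (q i G) v := by
  classical
  induction s using Finset.induction_on with
  | empty => exact ⟨.nil, trivial, fun G v => by simp [PresSum.val]⟩
  | insert j s hj ih =>
    obtain ⟨ts, htsP, hts⟩ :=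
      ih (fun i hi => hg i (mem_insert_of_mem hi)) fun i hi => hq i (mem_insert_of_mem hi)
    by_cases hlam : lam j = 0
    · exact ⟨ts, htsP, fun G v => by simp [sum_insert hj, hlam, hts]⟩
    obtain ⟨φ, hφP, hφ⟩ := hq j (mem_insert_self j s)
    refine ⟨.cons (lam j) (g j) φ ts, ⟨hg j (mem_insert_self j s) hlam, hφP, htsP⟩,
      fun G v => ?_⟩
    rw [sum_insert hj, ← hts, PresSum.val, NGraph.count]
    simp only [Bool.and_eq_true, hφ]

lemma definable_le_sum_count {ι : Type*} (s : Finset ι) (lam : ι → ℤ) (g : ι → MPGuard)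
    {q : ι → (G : NGraph n) → G.V → Prop} (hg : ∀ i ∈ s, lam i ≠ 0 → P (g i))
    (hq : ∀ i ∈ s, Definable P (q i)) (δ : ℤ) :
    Definable P fun G v => δ ≤ ∑ i ∈ s, lam i * G.count (g i) (q i G) v := by
  obtain ⟨ts, htsP, hts⟩ := exists_presSum_val_eq s lam g hg hq
  exact ⟨.pres δ ts, htsP, fun G v => by simp [MP2.sat, hts]⟩

lemma definable_comp_eq_of_tails {α : Type*} {f : ℤ → α} {a b : ℤ}
    (ha : ∀ m ≤ a, f m = f a) (hb : ∀ m ≥ b, f m = f b) {Q : (G : NGraph n) → G.V → ℤ}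
    (hQ : ∀ δ, Definable P fun G v => δ ≤ Q G v) (w : α) :
    Definable P fun G v => f (Q G v) = w := by
  have hlow := (hQ (a + 1)).not.and (definable_const (f a = w))
  have hhigh := (hQ b).and (definable_const (f b = w))
  have hmid := definable_exists_mem (Icc a b) fun m _ =>
    ((hQ m).and (hQ (m + 1)).not).and (definable_const (f m = w))
  refine ((hlow.or hhigh).or hmid).congr fun G v => ⟨?_, ?_⟩
  · rintro ((⟨hQa, rfl⟩ | ⟨hQb, rfl⟩) | ⟨m, -, ⟨hmQ, hQm⟩, rfl⟩)
    · exact ha _ (by omega)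
    · exact hb _ hQb
    · rw [show Q G v = m by omega]
  · rintro rfl
    by_cases hQa : Q G v ≤ a
    · exact Or.inl (Or.inl ⟨by omega, (ha _ hQa).symm⟩)
    by_cases hQb : b ≤ Q G v
    · exact Or.inl (Or.inr ⟨hQb, (hb _ hQb).symm⟩)
    exact Or.inr ⟨Q G v, mem_Icc.2 ⟨by omega, by omega⟩, ⟨le_rfl, by omega⟩, rfl⟩

def FiniteDefinable {β : Type*} (P : MPGuard → Prop) (F : (G : NGraph n) → G.V → β) : Prop :=
  (∃ S : Finset β, ∀ G v, F G v ∈ S) ∧ ∀ b, Definable P fun G v => F G v = b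

lemma FiniteDefinable.definable_comp {β : Type*} {F : (G : NGraph n) → G.V → β}
    (hF : FiniteDefinable P F) {p : β → (G : NGraph n) → G.V → Prop}
    (hp : ∀ b, Definable P (p b)) : Definable P fun G v => p (F G v) G v := by
  obtain ⟨⟨S, hS⟩, hfib⟩ := hF
  refine (definable_exists_mem S fun b _ => (hfib b).and (hp b)).congr fun G v => ⟨?_, ?_⟩
  · rintro ⟨b, -, rfl, h⟩
    exact h
  · exact fun h => ⟨F G v, hS G v, rfl, h⟩

lemma FiniteDefinable.pi {ι β : Type*} [Fintype ι] [DecidableEq ι]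
    {F : (G : NGraph n) → G.V → ι → β} (hF : ∀ i, FiniteDefinable P fun G v => F G v i) :
    FiniteDefinable P F := by
  choose S hS using fun i => (hF i).1
  refine ⟨⟨Fintype.piFinset S, fun G v => Fintype.mem_piFinset.2 fun i => hS i G v⟩, fun t => ?_⟩
  exact (definable_forall fun i => (hF i).2 (t i)).congr fun G v => funext_iff.symm

lemma FiniteDefinable.comp_add_div {β : Type*} {F : (G : NGraph n) → G.V → β}
    (hF : FiniteDefinable P F) (c : β → ℚ) {Q : (G : NGraph n) → G.V → ℤ} (hQ : ∀ δ, Definable P fun G v => δ ≤ Q G v)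
    {f : ℚ → ℚ} (hf : EventuallyConstant f) {D : ℕ} (hD : 0 < D) :
    FiniteDefinable P fun G v => f (c (F G v) + Q G v / D) := by
  classical
  choose a b hab ha hb using fun s => hf.exists_int_tails (c s) hD
  obtain ⟨S, hS⟩ := hF.1
  refine ⟨⟨S.biUnion fun s => (Icc (a s) (b s)).image fun m : ℤ => f (c s + m / D),
    fun G v => mem_biUnion.2 ⟨F G v, hS G v, mem_image_Icc_of_tails (hab _) (ha _) (hb _) _⟩⟩,
    fun w => ?_⟩
  exact hF.definable_comp fun s => definable_comp_eq_of_tails (ha s) (hb s) hQ w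

end MP2

open MP2

namespace GNN

def guardMatrix (A : GNN n) (ℓ : ℕ) : MPGuard → Matrix (Fin (A.d (ℓ+1))) (Fin (A.d ℓ)) ℚ
  | .out => A.Aout ℓ
  | .inc => A.Ain ℓ
  | .top => A.R ℓ

lemma feat_succ_apply (A : GNN n) (G : NGraph n) (ℓ : ℕ) (v : G.V) (i : Fin (A.d (ℓ+1))) :
    A.feat G (ℓ+1) v i = A.act ℓ ((A.C ℓ).mulVec (A.feat G ℓ v) i + A.b ℓ i +
      ∑ g, (A.guardMatrix ℓ g).mulVec (∑ u with g.holds G v u, A.feat G ℓ u) i) := by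
  have htop : ({u | MPGuard.holds G .top v u} : Finset G.V) = univ :=
    filter_true_of_mem fun _ _ => rfl
  rw [MPGuard.sum_univ, htop]
  show A.act ℓ _ = A.act ℓ (_ + _ + ((A.Aout ℓ).mulVec (∑ u with G.E v u, A.feat G ℓ u) i +
    (A.Ain ℓ).mulVec (∑ u with G.E u v, A.feat G ℓ u) i + (A.R ℓ).mulVec (∑ u, A.feat G ℓ u) i))
  congr 1
  ring

variable {P : MPGuard → Prop}

lemma finiteDefinable_feat_zero (A : GNN n) :
    FiniteDefinable P fun G v => A.feat G 0 v := by
  refine FiniteDefinable.pi fun i => ⟨⟨{0, 1}, fun G v => ?_⟩, fun w => ?_⟩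
  · simp only [feat]
    split_ifs <;> simp
  · refine (((definable_unary (Fin.cast A.d0 i)).and (definable_const (1 = w))).or
      ((definable_unary (Fin.cast A.d0 i)).not.and (definable_const (0 = w)))).congr
      fun G v => ?_
    simp only [feat]
    split_ifs <;> simp_all

lemma exists_feat_succ_eq (A : GNN n) (ℓ : ℕ) {S : Finset (Fin (A.d ℓ) → ℚ)}
    (hS : ∀ G v, A.feat G ℓ v ∈ S) (hfib : ∀ s, Definable P fun G v => A.feat G ℓ v = s)
    (hA : ∀ g, ¬P g → A.guardMatrix ℓ g = 0) :
    ∃ D : ℕ, 0 < D ∧ ∃ Q : Fin (A.d (ℓ+1)) → (G : NGraph n) → G.V → ℤ,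
      (∀ i δ, Definable P fun G v => δ ≤ Q i G v) ∧
      ∀ G v i, A.feat G (ℓ+1) v i =
        A.act ℓ ((A.C ℓ).mulVec (A.feat G ℓ v) i + A.b ℓ i + Q i G v / D) := by
  obtain ⟨D, hD, z, hz⟩ := exists_nat_mul_eq_int (S ×ˢ univ)
    fun p : _ × MPGuard × Fin (A.d (ℓ+1)) => (A.guardMatrix ℓ p.2.1).mulVec p.1 p.2.2
  have hzP : ∀ p ∈ S ×ˢ univ, z p ≠ 0 → P p.2.1 := fun p hp hzp => by
    by_contra hP
    exact hzp (by simpa [hA _ hP] using hz p hp)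
  refine ⟨D, hD, fun i G v => ∑ p ∈ S ×ˢ univ,
    z (p.1, p.2, i) * G.count p.2 (A.feat G ℓ · = p.1) v, fun i δ => ?_, fun G v i => ?_⟩
  · exact definable_le_sum_count (S ×ˢ univ) _ _
      (fun p hp => hzP (p.1, p.2, i) (by simpa using hp)) (fun p _ => hfib p.1) δ
  rw [feat_succ_apply]
  congr 2
  calc ∑ g, (A.guardMatrix ℓ g).mulVec (∑ u with g.holds G v u, A.feat G ℓ u) i
      = ∑ g, ∑ s ∈ S, (G.count g (A.feat G ℓ · = s) v : ℚ) * (A.guardMatrix ℓ g).mulVec s i := by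
        simp only [NGraph.mulVec_sum_holds (hS G), Finset.sum_apply, Pi.smul_apply]
        simp only [nsmul_eq_mul]
    _ = ∑ p ∈ S ×ˢ univ, (G.count p.2 (A.feat G ℓ · = p.1) v : ℚ) * (z (p.1, p.2, i) / D) := by
        rw [sum_product_right]
        refine sum_congr rfl fun g _ => sum_congr rfl fun s hs => ?_
        rw [hz (s, g, i) (mem_product.2 ⟨hs, mem_univ _⟩)]
        field_simp
    _ = _ := by
        push_cast
        rw [sum_div]
        exact sum_congr rfl fun p _ => by ring

lemma finiteDefinable_feat_succ (A : GNN n) (ℓ : ℕ)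
    (hF : FiniteDefinable P fun G v => A.feat G ℓ v) (hact : EventuallyConstant (A.act ℓ))
    (hA : ∀ g, ¬P g → A.guardMatrix ℓ g = 0) :
    FiniteDefinable P fun G v => A.feat G (ℓ+1) v := by
  obtain ⟨S, hS⟩ := hF.1
  obtain ⟨D, hD, Q, hQ, hfeat⟩ := A.exists_feat_succ_eq ℓ hS hF.2 hA
  simp only [funext fun G => funext fun v => funext (hfeat G v)]
  exact FiniteDefinable.pi fun i =>
    hF.comp_add_div (fun s => (A.C ℓ).mulVec s i + A.b ℓ i) (hQ i) hact hD

lemma finiteDefinable_feat (A : GNN n) (hec : ∀ ℓ < A.L, EventuallyConstant (A.act ℓ))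
    (hA : ∀ ℓ < A.L, ∀ g, ¬P g → A.guardMatrix ℓ g = 0) :
    ∀ ℓ ≤ A.L, FiniteDefinable P fun G v => A.feat G ℓ v
  | 0, _ => A.finiteDefinable_feat_zero
  | ℓ + 1, h =>
    A.finiteDefinable_feat_succ ℓ (A.finiteDefinable_feat hec hA ℓ (by omega)) (hec ℓ h) (hA ℓ h)

lemma exists_equivMP2_guardsIn (A : GNN n) (hec : ∀ ℓ < A.L, EventuallyConstant (A.act ℓ))
    (hA : ∀ ℓ < A.L, ∀ g, ¬P g → A.guardMatrix ℓ g = 0) :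
    ∃ φ : MP2 n, φ.GuardsIn P ∧ A.EquivMP2 φ := by
  obtain ⟨φ, hφP, hφ⟩ := (A.finiteDefinable_feat hec hA A.L le_rfl).definable_comp
    fun s => definable_const (1 / 2 ≤ s ⟨0, A.dpos A.L⟩)
  exact ⟨φ, hφP, fun G v => (hφ G v).symm⟩

end GNN

/-- Every `n`-GNN with eventually constant activations is
equivalent to some `n`-MP² formula; if the GNN is local the formula can be
taken in local MP², and if it is outgoing-only the formula can be taken
outgoing-only. -/
theorem gnn_to_mp2 {n : ℕ} (A : GNN n)
    (hec : ∀ ℓ < A.L, EventuallyConstant (A.act ℓ)) :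
    (∃ φ : MP2 n, A.EquivMP2 φ) ∧
    (A.IsLocal → ∃ φ : MP2 n, φ.IsLocal ∧ A.EquivMP2 φ) ∧
    (A.IsOutgoingOnly → ∃ φ : MP2 n, φ.IsOutgoingOnly ∧ A.EquivMP2 φ) := by
  refine ⟨?_, fun hloc => ?_, fun hout => ?_⟩
  · obtain ⟨φ, -, hφ⟩ := A.exists_equivMP2_guardsIn (P := fun _ => True) hec
      fun _ _ _ h => absurd trivial h
    exact ⟨φ, hφ⟩
  · obtain ⟨φ, hφP, hφ⟩ := A.exists_equivMP2_guardsIn (P := (· ≠ .top)) hec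
      fun ℓ hℓ g hg => by
        obtain rfl := not_not.1 hg
        exact hloc ℓ hℓ
    exact ⟨φ, hφP.isLocal, hφ⟩
  · obtain ⟨φ, hφP, hφ⟩ := A.exists_equivMP2_guardsIn (P := (· ≠ .inc)) hec
      fun ℓ hℓ g hg => by
        obtain rfl := not_not.1 hg
        exact hout ℓ hℓ
    exact ⟨φ, hφP.isOutgoingOnly, hφ⟩
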